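/- arXiv:1702.08321 — 2 statements merged into one kernel-verified Lean document; each statement's English description precedes it below -/
import Mathlib

section
/- The infinite product ∏_{k=1}^{∞} (L_{2k+1} + √5)/(L_{2k+1} - √5) converges and equals φ⁴, where φ = (1+√5)/2. -/
noncomputable def phi : ℝ := (1 + Real.sqrt 5) / 2

def lucas : ℕ → ℕ
  | 0 => 2
  | 1 => 1
  | n + 2 => lucas n + lucas (n + 1)

/-
Binet's formula gives `L n = φ ^ n + ψ ^ n` with `φ ψ = -1`, so for odd `n = m + 2` we get
`φ ^ n * L n = φ ^ (2 n) - 1`, and `√5 = 2 φ - 1` makes `φ ^ n (L n ± √5)` factor as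
`(φ ^ m ± 1) (φ ^ (m + 4) ∓ 1)`. Hence, with `r k = (φ ^ (2k+1) + 1) / (φ ^ (2k+1) - 1)`, the `k`-th
factor is `r k / r (k + 2)`: the partial products telescope to `r 0 r 1 / (r n r (n + 1))`, which
tends to `r 0 r 1 = φ ^ 3 * φ`. All factors are at least `1`, so taking logarithms upgrades
convergence of the partial products to unconditional convergence.
-/

open Filter Finset Topology Real
open scoped goldenRatio

theorem Finset.prod_range_div_of_ne_zero {G₀ : Type*} [CommGroupWithZero G₀] (f : ℕ → G₀)
    (hf : ∀ n, f n ≠ 0) (n : ℕ) : ∏ i ∈ range n, f i / f (i + 1) = f 0 / f n := by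
  induction n with
  | zero => simp [hf 0]
  | succ n ih => rw [prod_range_succ, ih, div_mul_div_cancel₀ (hf n)]

theorem tendsto_prod_range_div_add_two {K : Type*} [Field K] [TopologicalSpace K]
    [IsTopologicalDivisionRing K] {a : ℕ → K} (ha : ∀ n, a n ≠ 0)
    (h : Tendsto a atTop (𝓝 1)) :
    Tendsto (fun n ↦ ∏ k ∈ range n, a k / a (k + 2)) atTop (𝓝 (a 0 * a 1)) := by
  have hpair : ∀ k, a k / a (k + 2) = a k * a (k + 1) / (a (k + 1) * a (k + 2)) := fun k ↦ by
    rw [mul_comm (a (k + 1)), mul_div_mul_right _ _ (ha (k + 1))]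
  simp_rw [hpair, prod_range_div_of_ne_zero (fun k ↦ a k * a (k + 1))
    (fun k ↦ mul_ne_zero (ha k) (ha (k + 1)))]
  have hlim := h.mul (h.comp (tendsto_add_atTop_nat 1))
  rw [mul_one] at hlim
  have hquot := tendsto_const_nhds (x := a 0 * a 1) |>.div hlim one_ne_zero
  rwa [div_one] at hquot

theorem Real.hasProd_of_one_le_of_tendsto_prod_range {f : ℕ → ℝ} {a : ℝ} (hf : ∀ k, 1 ≤ f k)
    (h : Tendsto (fun n ↦ ∏ k ∈ range n, f k) atTop (𝓝 a)) : HasProd f a := by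
  have hfpos : ∀ k, 0 < f k := fun k ↦ one_pos.trans_le (hf k)
  have ha : 0 < a := one_pos.trans_le <|
    ge_of_tendsto' h fun n ↦ Finset.one_le_prod fun k _ ↦ hf k
  have hlog : HasSum (fun k ↦ log (f k)) (log a) := by
    rw [hasSum_iff_tendsto_nat_of_nonneg fun k ↦ log_nonneg (hf k)]
    simp_rw [← log_prod fun k _ ↦ (hfpos k).ne']
    exact ((continuousAt_log ha.ne').tendsto).comp h
  simpa [exp_log ha] using hasProd_of_hasSum_log hfpos hlog

theorem tendsto_add_one_div_sub_one_atTop :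
    Tendsto (fun x : ℝ ↦ (x + 1) / (x - 1)) atTop (𝓝 1) := by
  have h : Tendsto (fun x : ℝ ↦ 1 + 2 / (x - 1)) atTop (𝓝 (1 + 0)) :=
    tendsto_const_nhds.add <| tendsto_const_nhds.div_atTop <|
      tendsto_atTop_add_const_right _ _ tendsto_id
  rw [add_zero] at h
  refine h.congr' ?_
  filter_upwards [eventually_gt_atTop 1] with x hx
  field_simp [sub_ne_zero.mpr hx.ne']
  ring

theorem lucas_eq_goldenRatio_pow_add_goldenConj_pow (n : ℕ) : (lucas n : ℝ) = φ ^ n + ψ ^ n := by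
  induction n using lucas.induct with
  | case1 => norm_num [lucas]
  | case2 => simp [lucas, goldenRatio_add_goldenConj]
  | case3 n ih₀ ih₁ =>
    rw [lucas, Nat.cast_add, ih₀, ih₁]
    simp only [Nat.succ_eq_add_one]
    linear_combination (-φ ^ n) * goldenRatio_sq - ψ ^ n * goldenConj_sq

theorem lucas_mul_goldenRatio_pow_of_odd {n : ℕ} (hn : Odd n) :
    (lucas n : ℝ) * φ ^ n = (φ ^ n) ^ 2 - 1 := by
  rw [lucas_eq_goldenRatio_pow_add_goldenConj_pow, add_mul, ← mul_pow ψ, goldenConj_mul_goldenRatio,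
    hn.neg_one_pow]
  ring

theorem goldenRatio_pow_mul_lucas_add_sqrt_five {m : ℕ} (hm : Odd m) :
    φ ^ (m + 2) * (lucas (m + 2) + √5) = (φ ^ m + 1) * (φ ^ (m + 4) - 1) := by
  have hL := lucas_mul_goldenRatio_pow_of_odd (hm.add_even even_two)
  have hsqrt : √5 = 2 * φ - 1 := by ring
  rw [pow_add φ m 4, pow_add φ m 2] at *
  linear_combination hL + φ ^ m * φ ^ 2 * hsqrt - φ ^ m * (φ ^ 2 - φ + 1) * goldenRatio_sq

theorem goldenRatio_pow_mul_lucas_sub_sqrt_five {m : ℕ} (hm : Odd m) :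
    φ ^ (m + 2) * (lucas (m + 2) - √5) = (φ ^ m - 1) * (φ ^ (m + 4) + 1) := by
  have hL := lucas_mul_goldenRatio_pow_of_odd (hm.add_even even_two)
  have hsqrt : √5 = 2 * φ - 1 := by ring
  rw [pow_add φ m 4, pow_add φ m 2] at *
  linear_combination hL - φ ^ m * φ ^ 2 * hsqrt + φ ^ m * (φ ^ 2 - φ + 1) * goldenRatio_sq

theorem lucas_add_sqrt_five_div_sub_of_odd {m : ℕ} (hm : Odd m) :
    (lucas (m + 2) + √5) / (lucas (m + 2) - √5) =
      ((φ ^ m + 1) / (φ ^ m - 1)) / ((φ ^ (m + 4) + 1) / (φ ^ (m + 4) - 1)) := by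
  rw [← mul_div_mul_left _ _ (pow_ne_zero (m + 2) goldenRatio_ne_zero),
    goldenRatio_pow_mul_lucas_add_sqrt_five hm, goldenRatio_pow_mul_lucas_sub_sqrt_five hm,
    div_div_div_eq]

theorem sqrt_five_lt_lucas {m : ℕ} (hm : Odd m) : √5 < lucas (m + 2) := by
  have hpos : 0 < φ ^ (m + 2) * (lucas (m + 2) - √5) := by
    rw [goldenRatio_pow_mul_lucas_sub_sqrt_five hm]
    exact mul_pos (sub_pos.2 (one_lt_pow₀ one_lt_goldenRatio hm.pos.ne')) (by positivity)
  exact sub_pos.1 (pos_of_mul_pos_right hpos (by positivity))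

noncomputable def oddPowRatio (k : ℕ) : ℝ := (φ ^ (2 * k + 1) + 1) / (φ ^ (2 * k + 1) - 1)

theorem oddPowRatio_pos (k : ℕ) : 0 < oddPowRatio k := by
  have h := one_lt_pow₀ one_lt_goldenRatio (2 * k).succ_ne_zero
  exact div_pos (by positivity) (sub_pos.2 h)

theorem tendsto_oddPowRatio : Tendsto oddPowRatio atTop (𝓝 1) := by
  have hodd : Tendsto (fun k : ℕ ↦ 2 * k + 1) atTop atTop :=
    tendsto_atTop_mono (fun k ↦ by simp only [id]; omega) tendsto_id
  exact tendsto_add_one_div_sub_one_atTop.comp <|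
    (tendsto_pow_atTop_atTop_of_one_lt one_lt_goldenRatio).comp hodd

theorem oddPowRatio_zero_mul_oddPowRatio_one : oddPowRatio 0 * oddPowRatio 1 = φ ^ 4 := by
  have h₁ := sub_pos.2 one_lt_goldenRatio
  have h₃ := sub_pos.2 (one_lt_pow₀ one_lt_goldenRatio (n := 3) (by norm_num))
  norm_num only [oddPowRatio, pow_one] at h₁ ⊢
  rw [div_mul_div_comm, div_eq_iff (by positivity)]
  linear_combination (-1 - φ ^ 2 - φ ^ 4 - φ ^ 6) * goldenRatio_sq

theorem stmt_16 :
    HasProd (fun k : ℕ =>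
      ((lucas (2 * (k + 1) + 1) : ℝ) + Real.sqrt 5) / ((lucas (2 * (k + 1) + 1) : ℝ) - Real.sqrt 5))
      (phi ^ 4) := by
  have hindex : ∀ k, 2 * (k + 1) + 1 = 2 * k + 1 + 2 := fun k ↦ by ring
  have hterm : ∀ k, ((lucas (2 * (k + 1) + 1) : ℝ) + √5) / (lucas (2 * (k + 1) + 1) - √5) =
      oddPowRatio k / oddPowRatio (k + 2) := fun k ↦ by
    rw [hindex, lucas_add_sqrt_five_div_sub_of_odd (odd_two_mul_add_one k)]
    simp only [oddPowRatio, show 2 * k + 1 + 4 = 2 * (k + 2) + 1 by ring]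
  refine hasProd_of_one_le_of_tendsto_prod_range (fun k ↦ ?_) ?_
  · have h := sqrt_five_lt_lucas (odd_two_mul_add_one k)
    rw [← hindex] at h
    exact (one_le_div (sub_pos.2 h)).2 (by linarith [sqrt_nonneg 5])
  · simp_rw [hterm]
    rw [show phi = φ from rfl, ← oddPowRatio_zero_mul_oddPowRatio_one]
    exact tendsto_prod_range_div_add_two (fun k ↦ (oddPowRatio_pos k).ne') tendsto_oddPowRatio
end

section
/- For all positive integers q, n, ∏_{k=1}^{∞} (F_{(2n-1)(2q+2k)} + (-1)^{k-1} F_{(2n-1)·2q})/(F_{(2n-1)(2q+2k)} + (-1)^k F_{(2n-1)·2q}) = 5^q · ∏_{k=1}^{q} (F_{(2n-1)(2k-1)} · F_{(2n-1)·2k})/(L_{(2n-1)(2k-1)} · L_{(2n-1)·2k}). -/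
open Real Finset goldenRatio

/-! With `m = 2n - 1` odd and `y = mk`, the identities
`F_{s+2y} - (-1)^y F_s = L_{s+y} F_y` and `F_{s+2y} + (-1)^y F_s = F_{s+y} L_y` (for `s = 2mq`)
turn the `k`-th factor into `w_k / w_{k+2q}`, where `w_j = √5 F_{mj} / L_{mj}`.
By Binet, `w_j = (1 - x^{mj}) / (1 + x^{mj})` with `x = ψ/φ`, `|x| < 1`, so `log w_j` is
summable; hence the product converges unconditionally and telescopes to
`∏_{j=1}^{2q} w_j = 5^q ∏_{j=1}^{2q} F_{mj} / L_{mj}`. -/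

namespace Real

theorem summable_log_one_sub_div_one_add {ι : Type*} {f : ι → ℝ} (hf : Summable f) :
    Summable fun i => log ((1 - f i) / (1 + f i)) := by
  have hdiff : Summable fun i => log (1 + -f i) - log (1 + f i) :=
    (summable_log_one_add_of_summable hf.neg).sub (summable_log_one_add_of_summable hf)
  refine hdiff.congr_cofinite ?_
  filter_upwards [hf.tendsto_cofinite_zero.eventually (Ioo_mem_nhds neg_one_lt_zero one_pos)]
    with i ⟨hlo, hhi⟩
  rw [log_div (by linarith) (by linarith), sub_eq_add_neg 1]

theorem hasProd_div_nat_add {w : ℕ → ℝ} (hw : ∀ k, 0 < w k)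
    (hs : Summable fun k => log (w k)) (p : ℕ) :
    HasProd (fun k => w k / w (k + p)) (∏ k ∈ range p, w k) := by
  have hsum : HasSum (fun k => log (w k) - log (w (k + p))) (∑ k ∈ range p, log (w k)) := by
    simpa using hs.hasSum.sub ((hasSum_nat_add_iff' p).2 hs.hasSum)
  rw [← exp_log (prod_pos fun k _ => hw k), log_prod fun k _ => (hw k).ne']
  refine hasProd_of_hasSum_log (fun k => div_pos (hw k) (hw _)) ?_
  simpa only [log_div (hw _).ne' (hw _).ne'] using hsum

end Real

theorem Finset.prod_range_two_mul_eq_prod_Icc {M : Type*} [CommMonoid M] (f : ℕ → M) :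
    ∀ q : ℕ, ∏ k ∈ range (2 * q), f (k + 1) = ∏ k ∈ Icc 1 q, f (2 * k - 1) * f (2 * k)
  | 0 => by simp
  | q + 1 => by
      rw [show 2 * (q + 1) = 2 * q + 1 + 1 by ring, prod_range_succ, prod_range_succ,
        prod_range_two_mul_eq_prod_Icc f q, prod_Icc_succ_top (by omega),
        show 2 * (q + 1) - 1 = 2 * q + 1 by omega, mul_assoc]
      rfl

theorem lucas_pos : ∀ n, 0 < lucas n
  | 0 | 1 => by simp [lucas]
  | n + 2 => by rw [lucas]; have := lucas_pos n; omega

theorem coe_lucas_eq : ∀ n, (lucas n : ℝ) = φ ^ n + ψ ^ n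
  | 0 => by norm_num [lucas]
  | 1 => by norm_num [lucas]
  | n + 2 => by
      rw [lucas, Nat.cast_add, coe_lucas_eq n, coe_lucas_eq (n + 1), pow_add φ n 2, pow_add ψ n 2, goldenRatio_sq, goldenConj_sq]
      ring

theorem coe_fib_add_two_mul_sub (s y : ℕ) :
    (Nat.fib (s + 2 * y) : ℝ) - (-1) ^ y * Nat.fib s = lucas (s + y) * Nat.fib y := by
  rw [← goldenRatio_mul_goldenConj, coe_fib_eq, coe_fib_eq, coe_fib_eq, coe_lucas_eq]
  generalize φ = a, ψ = b
  ring

theorem coe_fib_add_two_mul_add (s y : ℕ) :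
    (Nat.fib (s + 2 * y) : ℝ) + (-1) ^ y * Nat.fib s = Nat.fib (s + y) * lucas y := by
  rw [← goldenRatio_mul_goldenConj, coe_fib_eq, coe_fib_eq, coe_fib_eq, coe_lucas_eq]
  generalize φ = a, ψ = b
  ring

theorem coe_fib_add_two_mul_sub_div_add (s y : ℕ) :
    ((Nat.fib (s + 2 * y) : ℝ) - (-1) ^ y * Nat.fib s) / (Nat.fib (s + 2 * y) + (-1) ^ y * Nat.fib s)
      = (Nat.fib y / lucas y) / (Nat.fib (s + y) / lucas (s + y)) := by
  rcases Nat.eq_zero_or_pos (s + y) with h | h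
  · obtain ⟨rfl, rfl⟩ : s = 0 ∧ y = 0 := by omega
    simp
  · have := Nat.fib_pos.2 h
    have := lucas_pos y
    have := lucas_pos (s + y)
    rw [coe_fib_add_two_mul_sub, coe_fib_add_two_mul_add]
    field_simp

theorem coe_fib_odd_mul_sub_div_add {m : ℕ} (hm : Odd m) (q k : ℕ) :
    ((Nat.fib (m * (2 * q + 2 * k)) : ℝ) - (-1) ^ k * Nat.fib (m * (2 * q))) /
        (Nat.fib (m * (2 * q + 2 * k)) + (-1) ^ k * Nat.fib (m * (2 * q)))
      = (Nat.fib (m * k) / lucas (m * k)) / (Nat.fib (m * (k + 2 * q)) / lucas (m * (k + 2 * q))) := by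
  rw [show m * (2 * q + 2 * k) = m * (2 * q) + 2 * (m * k) by ring,
    show m * (k + 2 * q) = m * (2 * q) + m * k by ring, ← hm.neg_one_pow, ← pow_mul]
  exact coe_fib_add_two_mul_sub_div_add _ _

theorem sqrt_five_mul_fib_div_lucas (i : ℕ) :
    √5 * ((Nat.fib i : ℝ) / lucas i) = (1 - (ψ / φ) ^ i) / (1 + (ψ / φ) ^ i) := by
  have : φ ^ i ≠ 0 := pow_ne_zero _ goldenRatio_ne_zero
  rw [coe_fib_eq, coe_lucas_eq, div_pow ψ φ, one_sub_div this, one_add_div this,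
    div_div_div_cancel_right₀ this, ← mul_div_assoc, mul_div_cancel₀ _ (by positivity)]

theorem abs_goldenConj_div_goldenRatio_lt_one : |ψ / φ| < 1 := by
  rw [abs_div, abs_of_neg goldenConj_neg, abs_of_pos goldenRatio_pos, div_lt_one goldenRatio_pos]
  linarith [neg_one_lt_goldenConj, one_lt_goldenRatio]

theorem summable_log_sqrt_five_mul_fib_div_lucas {m : ℕ} (hm : m ≠ 0) :
    Summable fun k => log (√5 * ((Nat.fib (m * (k + 1)) : ℝ) / lucas (m * (k + 1)))) := by
  have hgeom : Summable fun k : ℕ => (ψ / φ) ^ (m * (k + 1)) := by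
    have hr : |(ψ / φ) ^ m| < 1 := by
      rw [abs_pow]; exact pow_lt_one₀ (abs_nonneg _) abs_goldenConj_div_goldenRatio_lt_one hm
    simpa [pow_mul, pow_succ] using (summable_geometric_of_abs_lt_one hr).mul_right ((ψ / φ) ^ m)
  simpa only [sqrt_five_mul_fib_div_lucas] using summable_log_one_sub_div_one_add hgeom

theorem stmt_18_general (q n : ℕ) (hn : 0 < n) :
    ∏' k : ℕ,
        ((Nat.fib ((2 * n - 1) * (2 * q + 2 * (k + 1))) : ℝ) +
            (-1 : ℝ) ^ ((k + 1) - 1) * (Nat.fib ((2 * n - 1) * (2 * q)) : ℝ)) /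
          ((Nat.fib ((2 * n - 1) * (2 * q + 2 * (k + 1))) : ℝ) +
            (-1 : ℝ) ^ (k + 1) * (Nat.fib ((2 * n - 1) * (2 * q)) : ℝ)) =
      (5 : ℝ) ^ q *
        ∏ k ∈ Finset.Icc 1 q,
          ((Nat.fib ((2 * n - 1) * (2 * k - 1)) : ℝ) * (Nat.fib ((2 * n - 1) * (2 * k)) : ℝ)) /
            ((lucas ((2 * n - 1) * (2 * k - 1)) : ℝ) * (lucas ((2 * n - 1) * (2 * k)) : ℝ)) := by
  set m := 2 * n - 1
  have hm : Odd m := ⟨n - 1, by omega⟩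
  set w : ℕ → ℝ := fun k => √5 * ((Nat.fib (m * (k + 1)) : ℝ) / lucas (m * (k + 1)))
  have hw : ∀ k, 0 < w k := fun k => by
    have := Nat.fib_pos.2 (Nat.mul_pos hm.pos k.succ_pos)
    have := lucas_pos (m * (k + 1))
    positivity
  have hterm : ∀ k : ℕ,
      ((Nat.fib (m * (2 * q + 2 * (k + 1))) : ℝ) +
          (-1 : ℝ) ^ ((k + 1) - 1) * (Nat.fib (m * (2 * q)) : ℝ)) /
        ((Nat.fib (m * (2 * q + 2 * (k + 1))) : ℝ) +
          (-1 : ℝ) ^ (k + 1) * (Nat.fib (m * (2 * q)) : ℝ)) = w k / w (k + 2 * q) := by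
    intro k
    rw [Nat.add_sub_cancel, show (-1 : ℝ) ^ k = -(-1) ^ (k + 1) by ring, neg_mul,
      ← sub_eq_add_neg, coe_fib_odd_mul_sub_div_add hm]
    simp only [w, add_right_comm k (2 * q) 1]
    exact (mul_div_mul_left _ _ (by positivity)).symm
  rw [tprod_congr hterm, (hasProd_div_nat_add hw (summable_log_sqrt_five_mul_fib_div_lucas
      hm.pos.ne') (2 * q)).tprod_eq, prod_mul_distrib, prod_const, card_range, pow_mul,
    sq_sqrt (by norm_num : (0 : ℝ) ≤ 5),
    prod_range_two_mul_eq_prod_Icc (fun j => (Nat.fib (m * j) : ℝ) / lucas (m * j))]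
  simp only [div_mul_div_comm]

theorem stmt_18 (q n : ℕ) (hq : 0 < q) (hn : 0 < n) :
    ∏' k : ℕ,
        ((Nat.fib ((2 * n - 1) * (2 * q + 2 * (k + 1))) : ℝ) +
            (-1 : ℝ) ^ ((k + 1) - 1) * (Nat.fib ((2 * n - 1) * (2 * q)) : ℝ)) /
          ((Nat.fib ((2 * n - 1) * (2 * q + 2 * (k + 1))) : ℝ) +
            (-1 : ℝ) ^ (k + 1) * (Nat.fib ((2 * n - 1) * (2 * q)) : ℝ)) =
      (5 : ℝ) ^ q *
        ∏ k ∈ Finset.Icc 1 q,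
          ((Nat.fib ((2 * n - 1) * (2 * k - 1)) : ℝ) * (Nat.fib ((2 * n - 1) * (2 * k)) : ℝ)) /
            ((lucas ((2 * n - 1) * (2 * k - 1)) : ℝ) * (lucas ((2 * n - 1) * (2 * k)) : ℝ)) :=
  stmt_18_general q n hn
end
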